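/- Let (u, v, pu, pv) solve the FLRW null geodesic system on [s₁,S) with angular momentum L ≥ 0, with pv > 0 on [s₁,S) and with the mass shell relation 4t²r²·pu·pv = L² holding on [s₁,S). Then (r²·pu/pv)' = −4·r·pu²/pv ≤ 0 on [s₁,S); consequently r(s)²·pu(s)/pv(s) ≤ r(s₁)²·pu(s₁)/pv(s₁) for all s ∈ [s₁,S), and if in addition pu(s₁) ≤ pv(s₁), then r(s)²·pu(s) ≤ r(s₁)²·pv(s) for all s ∈ [s₁,S). -/

import Mathlib

/-!
Differentiating `r²·pu/pv` with `r' = pv − pu` gives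
`2r·pu(pv − pu)/pv + r²(pu'·pv − pu·pv')/pv²`. Once the mass shell relation replaces
`L²/(t²r²)` by `4·pu·pv`, all terms carrying `t^{-1/2}` cancel in `pu'·pv − pu·pv'`, which
becomes `−2·pu·pv(pu + pv)/r`; so the derivative is `−4r·pu²/pv ≤ 0`. The quotient is then
antitone, and `pu(s₁) ≤ pv(s₁)` bounds its initial value by `r(s₁)²`.
-/

/-- The time coordinate `t = (v+u)²/4` along a curve in double null coordinates. -/
noncomputable def tOf (u v : ℝ → ℝ) (s : ℝ) : ℝ := (v s + u s) ^ 2 / 4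

/-- The radial coordinate `r = v − u` along a curve in double null coordinates. -/
noncomputable def rOf (u v : ℝ → ℝ) (s : ℝ) : ℝ := v s - u s

/-- **The FLRW null geodesic system** with angular momentum `L` on a set `I ⊆ ℝ`:
`u' = pu`, `v' = pv`,
`pu' = −t^{−1/2}·pu² − (1/2)(1/(2t^{1/2}) + 1/r)·L²/(t²r²)`,
`pv' = −t^{−1/2}·pv² − (1/2)(1/(2t^{1/2}) − 1/r)·L²/(t²r²)`,
where `t = (v+u)²/4` and `r = v−u` are required to satisfy `v+u > 0`, `r > 0` on `I`,
and `pu ≥ 0`, `pv ≥ 0` on `I`. -/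
def FLRWGeodesicSystem (I : Set ℝ) (L : ℝ) (u v pu pv : ℝ → ℝ) : Prop :=
  (∀ s ∈ I, 0 < v s + u s) ∧
  (∀ s ∈ I, 0 < rOf u v s) ∧
  (∀ s ∈ I, 0 ≤ pu s) ∧
  (∀ s ∈ I, 0 ≤ pv s) ∧
  (∀ s ∈ I, HasDerivAt u (pu s) s) ∧
  (∀ s ∈ I, HasDerivAt v (pv s) s) ∧
  (∀ s ∈ I, HasDerivAt pu
    (-(pu s) ^ 2 / Real.sqrt (tOf u v s)
      - 1 / 2 * (1 / (2 * Real.sqrt (tOf u v s)) + 1 / rOf u v s) * L ^ 2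
          / ((tOf u v s) ^ 2 * (rOf u v s) ^ 2)) s) ∧
  (∀ s ∈ I, HasDerivAt pv
    (-(pv s) ^ 2 / Real.sqrt (tOf u v s)
      - 1 / 2 * (1 / (2 * Real.sqrt (tOf u v s)) - 1 / rOf u v s) * L ^ 2
          / ((tOf u v s) ^ 2 * (rOf u v s) ^ 2)) s)

open Set

lemma antitoneOn_of_forall_hasDerivAt_nonpos {D : Set ℝ} (hD : Convex ℝ D) {f f' : ℝ → ℝ}
    (hf : ∀ x ∈ D, HasDerivAt f (f' x) x) (hf' : ∀ x ∈ D, f' x ≤ 0) : AntitoneOn f D :=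
  antitoneOn_of_hasDerivWithinAt_nonpos hD
    (fun x hx ↦ (hf x hx).continuousAt.continuousWithinAt)
    (fun x hx ↦ (hf x (interior_subset hx)).hasDerivWithinAt)
    (fun x hx ↦ hf' x (interior_subset hx))

lemma tOf_pos {u v : ℝ → ℝ} {s : ℝ} (h : 0 < v s + u s) : 0 < tOf u v s := by
  unfold tOf
  positivity

lemma HasDerivAt.rOf {u v : ℝ → ℝ} {a b s : ℝ} (hu : HasDerivAt u a s)
    (hv : HasDerivAt v b s) :
    HasDerivAt (rOf u v) (b - a) s :=
  hv.sub hu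

lemma flrw_momentum_wronskian {t r pu pv L : ℝ} (ht : 0 < t) (hr : 0 < r)
    (hms : 4 * t ^ 2 * r ^ 2 * pu * pv = L ^ 2) :
    (-pu ^ 2 / Real.sqrt t - 1 / 2 * (1 / (2 * Real.sqrt t) + 1 / r) * L ^ 2 / (t ^ 2 * r ^ 2))
        * pv
      - pu * (-pv ^ 2 / Real.sqrt t
          - 1 / 2 * (1 / (2 * Real.sqrt t) - 1 / r) * L ^ 2 / (t ^ 2 * r ^ 2))
      = -(2 * pu * pv * (pu + pv) / r) := by
  have hsqrt : 0 < Real.sqrt t := Real.sqrt_pos.mpr ht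
  rw [← hms]
  field_simp
  ring

lemma hasDerivAt_sq_mul_div_of_wronskian {r a b : ℝ → ℝ} {A B s : ℝ}
    (hr : HasDerivAt r (b s - a s) s) (ha : HasDerivAt a A s) (hb : HasDerivAt b B s)
    (hr0 : r s ≠ 0) (hb0 : b s ≠ 0)
    (hW : A * b s - a s * B = -(2 * a s * b s * (a s + b s) / r s)) :
    HasDerivAt (fun x ↦ r x ^ 2 * a x / b x) (-(4 * r s * a s ^ 2 / b s)) s := by
  refine ((hr.pow 2).mul ha |>.div hb hb0).congr_deriv ?_
  simp only [Pi.pow_apply, Pi.mul_apply]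
  field_simp at hW ⊢
  linear_combination r s * hW

namespace FLRWGeodesicSystem

variable {I : Set ℝ} {L : ℝ} {u v pu pv : ℝ → ℝ}

lemma hasDerivAt_rOf_sq_mul_div (hsys : FLRWGeodesicSystem I L u v pu pv) {s : ℝ} (hs : s ∈ I)
    (hpv : 0 < pv s) (hms : 4 * (tOf u v s) ^ 2 * (rOf u v s) ^ 2 * pu s * pv s = L ^ 2) :
    HasDerivAt (fun s' ↦ (rOf u v s') ^ 2 * pu s' / pv s')
      (-(4 * rOf u v s * (pu s) ^ 2 / pv s)) s := by
  obtain ⟨hvu, hr, -, -, hu', hv', hpu', hpv'⟩ := hsys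
  exact hasDerivAt_sq_mul_div_of_wronskian ((hu' s hs).rOf (hv' s hs)) (hpu' s hs) (hpv' s hs)
    (hr s hs).ne' hpv.ne' (flrw_momentum_wronskian (tOf_pos (hvu s hs)) (hr s hs) hms)

lemma neg_four_mul_rOf_mul_sq_div_nonpos (hsys : FLRWGeodesicSystem I L u v pu pv) {s : ℝ}
    (hs : s ∈ I) : -(4 * rOf u v s * (pu s) ^ 2 / pv s) ≤ 0 := by
  have := hsys.2.1 s hs
  have := hsys.2.2.2.1 s hs
  rw [neg_nonpos]
  positivity

lemma antitoneOn_rOf_sq_mul_div (hsys : FLRWGeodesicSystem I L u v pu pv) (hI : Convex ℝ I)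
    (hpv : ∀ s ∈ I, 0 < pv s)
    (hms : ∀ s ∈ I, 4 * (tOf u v s) ^ 2 * (rOf u v s) ^ 2 * pu s * pv s = L ^ 2) :
    AntitoneOn (fun s ↦ (rOf u v s) ^ 2 * pu s / pv s) I :=
  antitoneOn_of_forall_hasDerivAt_nonpos hI
    (fun s hs ↦ hsys.hasDerivAt_rOf_sq_mul_div hs (hpv s hs) (hms s hs))
    (fun _ hs ↦ hsys.neg_four_mul_rOf_mul_sq_div_nonpos hs)

end FLRWGeodesicSystem

lemma mul_le_of_div_le_of_le {a b p q p₁ q₁ : ℝ} (hq : 0 < q) (hq₁ : 0 < q₁)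
    (hb : 0 ≤ b) (h : a * p / q ≤ b * p₁ / q₁) (h₁ : p₁ ≤ q₁) : a * p ≤ b * q := by
  have hb₁ : b * p₁ / q₁ ≤ b := by
    rw [div_le_iff₀ hq₁]
    exact mul_le_mul_of_nonneg_left h₁ hb
  rw [← div_le_iff₀ hq]
  exact h.trans hb₁

theorem flrw_geodesic_r2pupv_monotone_general (s₁ S L : ℝ) (hs₁S : s₁ < S)
    (u v pu pv : ℝ → ℝ)
    (hsys : FLRWGeodesicSystem (Ico s₁ S) L u v pu pv)
    (hpv : ∀ s ∈ Ico s₁ S, 0 < pv s)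
    (hms : ∀ s ∈ Ico s₁ S,
      4 * (tOf u v s) ^ 2 * (rOf u v s) ^ 2 * pu s * pv s = L ^ 2) :
    (∀ s ∈ Ico s₁ S,
      HasDerivAt (fun s' => (rOf u v s') ^ 2 * pu s' / pv s')
        (-(4 * rOf u v s * (pu s) ^ 2 / pv s)) s ∧
      -(4 * rOf u v s * (pu s) ^ 2 / pv s) ≤ 0) ∧
    (∀ s ∈ Ico s₁ S,
      (rOf u v s) ^ 2 * pu s / pv s ≤ (rOf u v s₁) ^ 2 * pu s₁ / pv s₁) ∧
    (pu s₁ ≤ pv s₁ →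
      ∀ s ∈ Ico s₁ S, (rOf u v s) ^ 2 * pu s ≤ (rOf u v s₁) ^ 2 * pv s) := by
  have hs₁ : s₁ ∈ Ico s₁ S := left_mem_Ico.mpr hs₁S
  have hmono : ∀ s ∈ Ico s₁ S,
      (rOf u v s) ^ 2 * pu s / pv s ≤ (rOf u v s₁) ^ 2 * pu s₁ / pv s₁ := fun s hs ↦
    hsys.antitoneOn_rOf_sq_mul_div (convex_Ico s₁ S) hpv hms hs₁ hs hs.1
  exact ⟨fun s hs ↦ ⟨hsys.hasDerivAt_rOf_sq_mul_div hs (hpv s hs) (hms s hs),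
      hsys.neg_four_mul_rOf_mul_sq_div_nonpos hs⟩,
    hmono,
    fun h₁ s hs ↦
      mul_le_of_div_le_of_le (hpv s hs) (hpv s₁ hs₁) (sq_nonneg _) (hmono s hs) h₁⟩

/-- **Monotonicity of `r²·pu/pv` along FLRW null geodesics.**
Let `(u,v,pu,pv)` solve the FLRW null geodesic system on `[s₁,S)` with angular momentum
`L ≥ 0`, with `pv > 0` and the mass shell relation `4t²r²·pu·pv = L²` on `[s₁,S)`.
Then `(r²·pu/pv)' = −4r·pu²/pv ≤ 0`; consequently
`r(s)²pu(s)/pv(s) ≤ r(s₁)²pu(s₁)/pv(s₁)` for all `s`, and if moreover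
`pu(s₁) ≤ pv(s₁)`, then `r(s)²pu(s) ≤ r(s₁)²pv(s)` for all `s`. -/
theorem flrw_geodesic_r2pupv_monotone (s₁ S L : ℝ) (hs₁S : s₁ < S) (hL : 0 ≤ L)
    (u v pu pv : ℝ → ℝ)
    (hsys : FLRWGeodesicSystem (Ico s₁ S) L u v pu pv)
    (hpv : ∀ s ∈ Ico s₁ S, 0 < pv s)
    (hms : ∀ s ∈ Ico s₁ S,
      4 * (tOf u v s) ^ 2 * (rOf u v s) ^ 2 * pu s * pv s = L ^ 2) :
    (∀ s ∈ Ico s₁ S,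
      HasDerivAt (fun s' => (rOf u v s') ^ 2 * pu s' / pv s')
        (-(4 * rOf u v s * (pu s) ^ 2 / pv s)) s ∧
      -(4 * rOf u v s * (pu s) ^ 2 / pv s) ≤ 0) ∧
    (∀ s ∈ Ico s₁ S,
      (rOf u v s) ^ 2 * pu s / pv s ≤ (rOf u v s₁) ^ 2 * pu s₁ / pv s₁) ∧
    (pu s₁ ≤ pv s₁ →
      ∀ s ∈ Ico s₁ S, (rOf u v s) ^ 2 * pu s ≤ (rOf u v s₁) ^ 2 * pv s) :=
  flrw_geodesic_r2pupv_monotone_general s₁ S L hs₁S u v pu pv hsys hpv hms
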